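/- In the independent-set reduction profile, swapping along a selected independent set yields an exchange-stable matching: given a graph H on vertices v_1,...,v_n and an independent set {v_{j_1},...,v_{j_h}} of size h, the matching M obtained from the initial matching M_0 = {{s_z,t_z} : z ∈ [h]} ∪ {{w_i,u_i},{y_i,x_i} : i ∈ [n]} by setting, for each z ∈ [h], M(s_z)=w_{j_z}, M(t_z)=x_{j_z}, M(u_{j_z})=y_{j_z} (and keeping all other pairs of M_0), is a perfect exchange-stable matching of the constructed bipartite profile. -/

import Mathlib

/-- The agents of the independent-set reduction profile:
`U = {s_z, u_i, x_i}` and `W = {t_z, w_i, y_i}`. -/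
inductive RAg (n h : ℕ)
  | s (z : Fin h) | t (z : Fin h) | u (i : Fin n) | x (i : Fin n) | w (i : Fin n) | y (i : Fin n)
deriving DecidableEq

/-- Rank of a potential partner in an agent's preference list in the reduction
profile built from the graph `Hg` (smaller = preferred; `2n + 2h + 2` =
unacceptable).  Preferences:
`s_j: w_1 ≻ … ≻ w_n ≻ t_j`; `t_j: u_1 ≻ … ≻ u_n ≻ x_1 ≻ … ≻ x_n ≻ s_j`;
`x_i: t_1 ≻ … ≻ t_h ≻ y_i`; `y_i: u_i ≻ x_i ≻ [U(v_i)]`;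
`u_i: w_i ≻ [Y(v_i)] ≻ y_i ≻ t_1 ≻ … ≻ t_h`; `w_i: s_1 ≻ … ≻ s_h ≻ u_i`,
where `U(v_i)`/`Y(v_i)` are the `u`/`y` agents of neighbours of `v_i` in `Hg`,
ordered ascendingly by index. -/
def rrank {n h : ℕ} (Hg : SimpleGraph (Fin n)) [DecidableRel Hg.Adj] :
    RAg n h → RAg n h → ℕ
  | .s _, .w i => (i : ℕ)
  | .s z, .t z' => if z = z' then n else 2 * n + 2 * h + 2
  | .t _, .u i => (i : ℕ)
  | .t _, .x i => n + (i : ℕ)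
  | .t z, .s z' => if z = z' then 2 * n else 2 * n + 2 * h + 2
  | .x _, .t z => (z : ℕ)
  | .x i, .y i' => if i = i' then h else 2 * n + 2 * h + 2
  | .y i, .u i' =>
      if i = i' then 0 else if Hg.Adj i i' then 2 + (i' : ℕ) else 2 * n + 2 * h + 2
  | .y i, .x i' => if i = i' then 1 else 2 * n + 2 * h + 2
  | .u i, .w i' => if i = i' then 0 else 2 * n + 2 * h + 2
  | .u i, .y i' =>
      if i = i' then n + 1 else if Hg.Adj i i' then 1 + (i' : ℕ) else 2 * n + 2 * h + 2
  | .u _, .t z => n + 2 + (z : ℕ)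
  | .w _, .s z => (z : ℕ)
  | .w i, .u i' => if i = i' then h else 2 * n + 2 * h + 2
  | _, _ => 2 * n + 2 * h + 2

/-!
Encode the swapped matching as the symmetric relation `SwapPair j`, in which every agent has
exactly one partner. No two agents prefer each other's partner: an agent matched to its first
choice (`u_i` for `v_i` outside the independent set, `y_i` for `v_i` inside it) envies nobody;
two `s`, `t`, `w` or `x` agents whose partners are of the same kind order these partners by a
common list; in every other case one of the two agents finds the other's partner unacceptable,
except for two `u` agents of the independent set, whose partners `y` would have to be adjacent.
-/

/-- In `ws` and `xt` the index `i` is tied to `j z` by an equation, so that `cases` on two pairs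
sharing their first agent never has to unify `j z` with `j z'`. -/
inductive SwapPair {n h : ℕ} (j : Fin h → Fin n) : RAg n h → RAg n h → Prop
  | sw (z : Fin h) : SwapPair j (.s z) (.w (j z))
  | ws {i : Fin n} (z : Fin h) (hz : j z = i) : SwapPair j (.w i) (.s z)
  | tx (z : Fin h) : SwapPair j (.t z) (.x (j z))
  | xt {i : Fin n} (z : Fin h) (hz : j z = i) : SwapPair j (.x i) (.t z)
  | uy (i : Fin n) (hi : i ∈ Set.range j) : SwapPair j (.u i) (.y i)
  | yu (i : Fin n) (hi : i ∈ Set.range j) : SwapPair j (.y i) (.u i)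
  | uw (i : Fin n) (hi : i ∉ Set.range j) : SwapPair j (.u i) (.w i)
  | wu (i : Fin n) (hi : i ∉ Set.range j) : SwapPair j (.w i) (.u i)
  | yx (i : Fin n) (hi : i ∉ Set.range j) : SwapPair j (.y i) (.x i)
  | xy (i : Fin n) (hi : i ∉ Set.range j) : SwapPair j (.x i) (.y i)

namespace SwapPair

variable {n h : ℕ} {j : Fin h → Fin n} {a b c d : RAg n h}

theorem symm (hac : SwapPair j a c) : SwapPair j c a := by
  rcases hac with z | ⟨z, rfl⟩ | z | ⟨z, rfl⟩ | ⟨i, hi⟩ | ⟨i, hi⟩ | ⟨i, hi⟩ | ⟨i, hi⟩ | ⟨i, hi⟩ |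
    ⟨i, hi⟩
  exacts [.ws z rfl, .sw z, .xt z rfl, .tx z, .yu i hi, .uy i hi, .wu i hi, .uw i hi, .xy i hi,
    .yx i hi]

theorem ne (hac : SwapPair j a c) : a ≠ c := by
  cases hac <;> simp

theorem unique (hj : Function.Injective j) (hac : SwapPair j a c) (had : SwapPair j a d) :
    c = d := by
  cases hac <;> cases had <;> subst_vars <;> simp_all [hj.eq_iff]

theorem not_mutual_envy {Hg : SimpleGraph (Fin n)} [DecidableRel Hg.Adj]
    (hind : Hg.IsIndepSet (Set.range j)) (hac : SwapPair j a c) (hbd : SwapPair j b d)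
    (had : rrank Hg a d < rrank Hg a c) (hbc : rrank Hg b c < rrank Hg b d) : False := by
  cases hac <;> cases hbd <;> simp only [rrank] at had hbc <;>
    (try split_ifs at had hbc) <;>
    first | omega | exact absurd ‹Hg.Adj _ _› (hind ‹_› ‹_› (Hg.ne_of_adj ‹_›))

end SwapPair

/-- given an independent set `{v_{j 1}, …, v_{j h}}` of the graph
`Hg`, the matching obtained from the initial matching by swapping along the
independent set (i.e. `M(s_z) = w_{j z}`, `M(t_z) = x_{j z}`,
`M(u_{j z}) = y_{j z}`, all other agents matched as initially) is a perfect
exchange-stable matching of the reduction profile. -/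
theorem stmt_19 (n h : ℕ) (Hg : SimpleGraph (Fin n)) [DecidableRel Hg.Adj]
    (j : Fin h → Fin n) (hjinj : Function.Injective j)
    (hind : ∀ z z', ¬ Hg.Adj (j z) (j z'))
    (M : RAg n h → RAg n h)
    (hMs : ∀ z, M (.s z) = .w (j z)) (hMw1 : ∀ z, M (.w (j z)) = .s z)
    (hMt : ∀ z, M (.t z) = .x (j z)) (hMx1 : ∀ z, M (.x (j z)) = .t z)
    (hMu1 : ∀ z, M (.u (j z)) = .y (j z)) (hMy1 : ∀ z, M (.y (j z)) = .u (j z))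
    (hMw2 : ∀ i, (∀ z, j z ≠ i) → M (.w i) = .u i ∧ M (.u i) = .w i)
    (hMy2 : ∀ i, (∀ z, j z ≠ i) → M (.y i) = .x i ∧ M (.x i) = .y i) :
    (∀ a, M (M a) = a) ∧ (∀ a, M a ≠ a) ∧
      ¬ ∃ a b : RAg n h, a ≠ b ∧
          rrank Hg a (M b) < rrank Hg a (M a) ∧
          rrank Hg b (M a) < rrank Hg b (M b) := by
  have hpair : ∀ a, SwapPair j a (M a) := by
    rintro (z | z | i | i | i | i)
    · exact hMs z ▸ .sw z
    · exact hMt z ▸ .tx z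
    all_goals rcases em (i ∈ Set.range j) with ⟨z, rfl⟩ | hi
    · exact hMu1 z ▸ .uy _ ⟨z, rfl⟩
    · exact (hMw2 i fun z hz => hi ⟨z, hz⟩).2 ▸ .uw i hi
    · exact hMx1 z ▸ .xt z rfl
    · exact (hMy2 i fun z hz => hi ⟨z, hz⟩).2 ▸ .xy i hi
    · exact hMw1 z ▸ .ws z rfl
    · exact (hMw2 i fun z hz => hi ⟨z, hz⟩).1 ▸ .wu i hi
    · exact hMy1 z ▸ .yu _ ⟨z, rfl⟩
    · exact (hMy2 i fun z hz => hi ⟨z, hz⟩).1 ▸ .yx i hi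
  have hindep : Hg.IsIndepSet (Set.range j) := by
    rintro _ ⟨z, rfl⟩ _ ⟨z', rfl⟩ -
    exact hind z z'
  refine ⟨fun a => (hpair (M a)).unique hjinj (hpair a).symm, fun a => (hpair a).ne.symm, ?_⟩
  rintro ⟨a, b, -, had, hbc⟩
  exact (hpair a).not_mutual_envy hindep (hpair b) had hbc
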